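/- arXiv:2108.05908 — 3 statements merged into one kernel-verified Lean document; each statement's English description precedes it below -/
import Mathlib

section
/- Let φ : (0,∞) → ℝ be convex with φ(1) = φ'(1) = 0 and φ''(1) > 0, having continuous second derivative on (0,∞), and let q > 0. Then there exists a constant C_φ (depending only on φ and q) such that for every n ≥ 1 and every vector L ∈ (0,∞)ⁿ with (1/n)Σᵢφ(Lᵢ) ≤ q/(2n), one has ‖L − 𝟙ₙ‖₂ ≤ C_φ; moreover, there exists a constant c_φ > 0 such that if in addition (1/n)Σᵢφ(Lᵢ) = q/(2n), then ‖L − 𝟙ₙ‖₂ ≥ c_φ. -/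
/-!
Near `1` the second derivative stays above `φ''(1)/2`, so `φ(x) ≥ m (x - 1)²` on some
`[1 - δ, 1 + δ]`; convexity and `φ(1) = 0` upgrade this to linear growth `φ(x) ≥ m δ |x - 1|`
outside it. Hence `(x - 1)² ≤ φ(x)/m + (φ(x)/(m δ))²` pointwise, and summing against
`Σ φ(Lᵢ) ≤ q/2` (with `φ ≥ 0`) bounds `‖L - 𝟙ₙ‖₂` uniformly in `n`. Conversely Taylor gives
`φ(x) ≤ M (x - 1)²` near `1`, so a very small `‖L - 𝟙ₙ‖₂` would force `Σ φ(Lᵢ) < q/2`.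
-/

open Finset

theorem ConvexOn.le_of_hasDerivAt_eq_zero {S : Set ℝ} {f : ℝ → ℝ} {a x : ℝ}
    (hf : ConvexOn ℝ S f) (ha : a ∈ S) (hx : x ∈ S) (hfa : HasDerivAt f 0 a) : f a ≤ f x := by
  rcases lt_trichotomy a x with hax | rfl | hxa
  · have := hf.le_slope_of_hasDerivAt ha hx hax hfa
    rw [slope_def_field, le_div_iff₀ (sub_pos.2 hax)] at this
    linarith
  · rfl
  · have := hf.slope_le_of_hasDerivAt hx ha hxa hfa
    rw [slope_def_field, div_le_iff₀ (sub_pos.2 hxa)] at this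
    linarith

theorem quadratic_taylor_le_of_le_deriv2 {f f' f'' : ℝ → ℝ} {s : Set ℝ} {m a x : ℝ}
    (hs : Convex ℝ s) (hf : ∀ y ∈ s, HasDerivAt f (f' y) y)
    (hf' : ∀ y ∈ s, HasDerivAt f' (f'' y) y) (hm : ∀ y ∈ s, m ≤ f'' y) (ha : a ∈ s)
    (hx : x ∈ s) : f a + f' a * (x - a) + m / 2 * (x - a) ^ 2 ≤ f x := by
  set g := fun y ↦ f y - (f' a * (y - a) + m / 2 * (y - a) ^ 2)
  have hg : ∀ y ∈ s, HasDerivAt g (f' y - f' a - m * (y - a)) y := fun y hy ↦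
    ((hf y hy).sub ((((hasDerivAt_id' y).sub_const a).const_mul (f' a)).add
      ((((hasDerivAt_id' y).sub_const a).pow 2).const_mul (m / 2)))).congr_deriv (by norm_num; ring)
  have hg' : ∀ y ∈ s, HasDerivAt (fun y ↦ f' y - f' a - m * (y - a)) (f'' y - m) y :=
    fun y hy ↦ (((hf' y hy).sub_const (f' a)).sub
      (((hasDerivAt_id' y).sub_const a).const_mul m)).congr_deriv (by ring)
  have hconv : ConvexOn ℝ s g :=
    convexOn_of_hasDerivWithinAt2_nonneg hs
      (fun y hy ↦ (hg y hy).continuousAt.continuousWithinAt)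
      (fun y hy ↦ (hg y (interior_subset hy)).hasDerivWithinAt)
      (fun y hy ↦ (hg' y (interior_subset hy)).hasDerivWithinAt)
      (fun y hy ↦ sub_nonneg.2 (hm y (interior_subset hy)))
  have := hconv.le_of_hasDerivAt_eq_zero ha hx (by simpa using hg a ha)
  simp only [g] at this
  linear_combination this

theorem ContDiffOn.hasDerivAt_deriv_of_isOpen {f : ℝ → ℝ} {U : Set ℝ} {n : WithTop ℕ∞}
    (hf : ContDiffOn ℝ n f U) (hU : IsOpen U) (hn : n ≠ 0) {y : ℝ} (hy : y ∈ U) :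
    HasDerivAt f (deriv f y) y :=
  ((hf.differentiableOn hn) y hy).differentiableAt (hU.mem_nhds hy) |>.hasDerivAt

theorem ContDiffOn.exists_sq_le_of_deriv2_pos {f : ℝ → ℝ} {U : Set ℝ} {a : ℝ}
    (hf : ContDiffOn ℝ 2 f U) (hU : IsOpen U) (ha : a ∈ U) (hfa : f a = 0)
    (hf'a : deriv f a = 0) (hf''a : 0 < deriv (deriv f) a) :
    ∃ m > 0, ∃ δ > 0, ∀ y, |y - a| ≤ δ → m * (y - a) ^ 2 ≤ f y := by
  have hf' : ContDiffOn ℝ 1 (deriv f) U := hf.deriv_of_isOpen hU (by norm_num)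
  have hcont : ContinuousAt (deriv (deriv f)) a :=
    (hf'.continuousOn_deriv_of_isOpen hU le_rfl).continuousAt (hU.mem_nhds ha)
  obtain ⟨ε, hε, hball⟩ := Metric.eventually_nhds_iff.1
    ((hcont.eventually (lt_mem_nhds (half_lt_self hf''a))).and (hU.mem_nhds ha))
  have hball' : ∀ y ∈ Metric.closedBall a (ε / 2),
      deriv (deriv f) a / 2 < deriv (deriv f) y ∧ y ∈ U := fun y hy ↦
    hball (lt_of_le_of_lt (Metric.mem_closedBall.1 hy) (half_lt_self hε))
  refine ⟨deriv (deriv f) a / 4, by positivity, ε / 2, by positivity, fun y hy ↦ ?_⟩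
  have := quadratic_taylor_le_of_le_deriv2 (convex_closedBall a (ε / 2))
    (fun z hz ↦ hf.hasDerivAt_deriv_of_isOpen hU two_ne_zero (hball' z hz).2)
    (fun z hz ↦ hf'.hasDerivAt_deriv_of_isOpen hU one_ne_zero (hball' z hz).2)
    (fun z hz ↦ (hball' z hz).1.le) (Metric.mem_closedBall_self (by positivity))
    (by rwa [Metric.mem_closedBall, Real.dist_eq])
  rw [hfa, hf'a] at this
  linarith

theorem ContDiffOn.exists_le_sq {f : ℝ → ℝ} {U : Set ℝ} {a : ℝ}
    (hf : ContDiffOn ℝ 2 f U) (hU : IsOpen U) (ha : a ∈ U) (hfa : f a = 0)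
    (hf'a : deriv f a = 0) :
    ∃ M > 0, ∃ r > 0, ∀ y, |y - a| ≤ r → f y ≤ M * (y - a) ^ 2 := by
  have hf' : ContDiffOn ℝ 1 (deriv f) U := hf.deriv_of_isOpen hU (by norm_num)
  obtain ⟨ε, hε, hball⟩ := Metric.isOpen_iff.1 hU a ha
  have hsub : Metric.closedBall a (ε / 2) ⊆ U :=
    (Metric.closedBall_subset_ball (half_lt_self hε)).trans hball
  obtain ⟨B, hB⟩ := (isCompact_closedBall a (ε / 2)).exists_bound_of_continuousOn
    ((hf'.continuousOn_deriv_of_isOpen hU le_rfl).mono hsub)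
  refine ⟨max B 1 / 2, by positivity, ε / 2, by positivity, fun y hy ↦ ?_⟩
  have := quadratic_taylor_le_of_le_deriv2 (f := -f) (f' := -deriv f) (f'' := -deriv (deriv f))
    (m := -max B 1) (convex_closedBall a (ε / 2))
    (fun z hz ↦ (hf.hasDerivAt_deriv_of_isOpen hU two_ne_zero (hsub hz)).neg)
    (fun z hz ↦ (hf'.hasDerivAt_deriv_of_isOpen hU one_ne_zero (hsub hz)).neg)
    (fun z hz ↦ neg_le_neg (((le_abs_self _).trans (hB z hz)).trans (le_max_left _ _)))
    (Metric.mem_closedBall_self (by positivity)) (by rwa [Metric.mem_closedBall, Real.dist_eq])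
  simp only [Pi.neg_apply, hfa, hf'a] at this
  linarith

theorem ConvexOn.mul_abs_sub_le {S : Set ℝ} {f : ℝ → ℝ} {a δ m x : ℝ} (hf : ConvexOn ℝ S f)
    (ha : a ∈ S) (hfa : f a = 0) (hδ : 0 < δ)
    (hquad : ∀ y ∈ S, |y - a| ≤ δ → m * (y - a) ^ 2 ≤ f y) (hx : x ∈ S) (hδx : δ ≤ |x - a|) :
    m * δ * |x - a| ≤ f x := by
  have hd : 0 < |x - a| := hδ.trans_le hδx
  set t := δ / |x - a|
  have ht0 : 0 ≤ t := by positivity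
  have ht1 : t ≤ 1 := div_le_one_of_le₀ hδx hd.le
  have hy := hf.1 ha hx (sub_nonneg.2 ht1) ht0 (sub_add_cancel 1 t)
  have hconv := hf.2 ha hx (sub_nonneg.2 ht1) ht0 (sub_add_cancel 1 t)
  simp only [smul_eq_mul, hfa, mul_zero, zero_add] at hy hconv
  have hty : |(1 - t) * a + t * x - a| = δ := by
    rw [show (1 - t) * a + t * x - a = t * (x - a) by ring, abs_mul, abs_of_nonneg ht0,
      div_mul_cancel₀ _ hd.ne']
  have := (hquad _ hy hty.le).trans hconv
  rw [← sq_abs, hty, div_mul_eq_mul_div, le_div_iff₀ hd] at this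
  exact le_of_mul_le_mul_left (by linear_combination this) hδ

theorem ConvexOn.sq_sub_le {S : Set ℝ} {f : ℝ → ℝ} {a δ m x : ℝ} (hf : ConvexOn ℝ S f)
    (ha : a ∈ S) (hfa : f a = 0) (hδ : 0 < δ) (hm : 0 < m)
    (hquad : ∀ y ∈ S, |y - a| ≤ δ → m * (y - a) ^ 2 ≤ f y) (hx : x ∈ S) :
    (x - a) ^ 2 ≤ m⁻¹ * f x + ((m * δ)⁻¹ * f x) ^ 2 := by
  rcases le_total |x - a| δ with hxa | hxa
  · have hsq : (x - a) ^ 2 ≤ m⁻¹ * f x := by rw [le_inv_mul_iff₀ hm]; exact hquad x hx hxa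
    linarith [sq_nonneg ((m * δ)⁻¹ * f x)]
  · have hlin := hf.mul_abs_sub_le ha hfa hδ hquad hx hxa
    have h1 : |x - a| ≤ (m * δ)⁻¹ * f x := by rwa [le_inv_mul_iff₀ (by positivity)]
    have h2 : 0 ≤ m⁻¹ * f x :=
      mul_nonneg (inv_nonneg.2 hm.le) ((by positivity : 0 ≤ m * δ * |x - a|).trans hlin)
    rw [← sq_abs]
    linarith [pow_le_pow_left₀ (abs_nonneg _) h1 2]

theorem Finset.sum_le_mul_add_sq_of_le {ι : Type*} (s : Finset ι) {t u : ι → ℝ} {A B U : ℝ}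
    (hA : 0 ≤ A) (hu : ∀ i ∈ s, 0 ≤ u i) (htu : ∀ i ∈ s, t i ≤ A * u i + (B * u i) ^ 2)
    (hU : ∑ i ∈ s, u i ≤ U) : ∑ i ∈ s, t i ≤ A * U + (B * U) ^ 2 := by
  have hsum : 0 ≤ ∑ i ∈ s, u i := sum_nonneg hu
  calc ∑ i ∈ s, t i ≤ ∑ i ∈ s, (A * u i + (B * u i) ^ 2) := sum_le_sum htu
    _ = A * ∑ i ∈ s, u i + B ^ 2 * ∑ i ∈ s, u i ^ 2 := by
      simp only [sum_add_distrib, mul_sum, mul_pow]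
    _ ≤ A * ∑ i ∈ s, u i + B ^ 2 * (∑ i ∈ s, u i) ^ 2 := by
      gcongr; exact sum_sq_le_sq_sum_of_nonneg hu
    _ ≤ A * U + (B * U) ^ 2 := by rw [mul_pow]; gcongr

theorem min_le_sqrt_sum_sq_sub {ι : Type*} [Fintype ι] {f : ℝ → ℝ} {x : ι → ℝ} {a M r c : ℝ}
    (hM : 0 < M) (hf : ∀ y, |y - a| ≤ r → f y ≤ M * (y - a) ^ 2) (hc : c ≤ ∑ i, f (x i)) :
    min r √(c / M) ≤ √(∑ i, (x i - a) ^ 2) := by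
  by_contra! h
  have hclose : ∀ i, |x i - a| ≤ r := fun i ↦ by
    refine (Real.abs_le_sqrt ?_).trans ((h.trans_le (min_le_left _ _)).le)
    exact single_le_sum (f := fun i ↦ (x i - a) ^ 2) (fun i _ ↦ sq_nonneg _) (mem_univ i)
  have hsmall : ∑ i, (x i - a) ^ 2 < c / M :=
    (Real.sqrt_lt_sqrt_iff (sum_nonneg fun i _ ↦ sq_nonneg _)).1 (h.trans_le (min_le_right _ _))
  have : ∑ i, f (x i) ≤ M * ∑ i, (x i - a) ^ 2 := by
    rw [mul_sum]; exact sum_le_sum fun i _ ↦ hf _ (hclose i)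
  rw [lt_div_iff₀' hM] at hsmall
  linarith

/-- **Lemma 6.1 (Lemma 13 of Duchi et al.): the divergence ball confines `L` to a Euclidean
ring around `𝟙ₙ`.**  If `φ : (0,∞) → ℝ` is convex with `φ(1) = φ'(1) = 0`, `φ''(1) > 0` and a
continuous second derivative on `(0,∞)`, and `q > 0`, then there is a constant `C_φ` such that
every `L ∈ (0,∞)ⁿ` with `(1/n)·Σᵢ φ(Lᵢ) ≤ q/(2n)` satisfies `‖L − 𝟙ₙ‖₂ ≤ C_φ`, and a constant
`c_φ > 0` such that every such `L` with `(1/n)·Σᵢ φ(Lᵢ) = q/(2n)` satisfies `‖L − 𝟙ₙ‖₂ ≥ c_φ`. -/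
theorem dro_likelihood_ratio_ring (φ : ℝ → ℝ) (q : ℝ) (hq : 0 < q)
    (hconv : ConvexOn ℝ (Set.Ioi (0 : ℝ)) φ)
    (hφ1 : φ 1 = 0) (hφ'1 : deriv φ 1 = 0) (hφ''1 : 0 < iteratedDeriv 2 φ 1)
    (hsmooth : ContDiffOn ℝ 2 φ (Set.Ioi (0 : ℝ))) :
    ∃ Cφ : ℝ, ∃ cφ : ℝ, 0 < cφ ∧
      (∀ n : ℕ, 1 ≤ n → ∀ L : Fin n → ℝ, (∀ i, 0 < L i) →
          ((n : ℝ))⁻¹ * ∑ i : Fin n, φ (L i) ≤ q / (2 * (n : ℝ)) →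
          Real.sqrt (∑ i : Fin n, (L i - 1) ^ 2) ≤ Cφ) ∧
      (∀ n : ℕ, 1 ≤ n → ∀ L : Fin n → ℝ, (∀ i, 0 < L i) →
          ((n : ℝ))⁻¹ * ∑ i : Fin n, φ (L i) = q / (2 * (n : ℝ)) →
          cφ ≤ Real.sqrt (∑ i : Fin n, (L i - 1) ^ 2)) := by
  have h1 : (1 : ℝ) ∈ Set.Ioi 0 := Set.mem_Ioi.2 one_pos
  have hφ''1_deriv : 0 < deriv (deriv φ) 1 := by
    rwa [iteratedDeriv_succ, iteratedDeriv_one] at hφ''1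
  obtain ⟨m, hm, δ, hδ, hquad⟩ :=
    hsmooth.exists_sq_le_of_deriv2_pos isOpen_Ioi h1 hφ1 hφ'1 hφ''1_deriv
  obtain ⟨M, hM, r, hr, hup⟩ := hsmooth.exists_le_sq isOpen_Ioi h1 hφ1 hφ'1
  have hφ_nonneg : ∀ x ∈ Set.Ioi (0 : ℝ), 0 ≤ φ x := fun x hx ↦ hφ1 ▸
    hconv.le_of_hasDerivAt_eq_zero h1 hx
      (hφ'1 ▸ hsmooth.hasDerivAt_deriv_of_isOpen isOpen_Ioi two_ne_zero h1)
  refine ⟨√(m⁻¹ * (q / 2) + ((m * δ)⁻¹ * (q / 2)) ^ 2), min r √(q / 2 / M), by positivity,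
    fun n hn L hL hLq ↦ ?_, fun n hn L hL hLq ↦ ?_⟩ <;>
  have hn' : (0 : ℝ) < n := by exact_mod_cast hn
  · rw [inv_mul_eq_div, ← div_div, div_le_div_iff_of_pos_right hn'] at hLq
    exact Real.sqrt_le_sqrt <| sum_le_mul_add_sq_of_le _ (by positivity)
      (fun i _ ↦ hφ_nonneg _ (hL i))
      (fun i _ ↦ hconv.sq_sub_le h1 hφ1 hδ hm (fun y _ ↦ hquad y) (hL i)) hLq
  · rw [inv_mul_eq_div, ← div_div, div_left_inj' hn'.ne'] at hLq
    exact min_le_sqrt_sum_sq_sub hM hup hLq.ge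
end

section
/- Let n ≥ 1, let φ : [0,∞) → (−∞,∞] be convex and lower semicontinuous with φ finite on (0,∞), let Δ = {p ∈ ℝⁿ : pᵢ ≥ 0, Σpᵢ = 1}, define the divergence D(p) = (1/n)·Σᵢ φ(n·pᵢ), let η ∈ ℝ, and suppose the feasible set S = {p ∈ Δ : D(p) ≤ η} is nonempty. Let ψ : Δ → ℝ be continuous, let ψ_min = min_{p∈S} ψ(p) and ψ_max = max_{p∈S} ψ(p) (attained since S is compact), and define the profile divergence W(t) = inf{D(p) : p ∈ Δ, ψ(p) = t} (with inf ∅ = +∞). Then {t ∈ ℝ : W(t) ≤ η} = [ψ_min, ψ_max]. In particular, the confidence region produced by thresholding the profile divergence (the empirical-likelihood construction) coincides with the interval of optimal values of the pair of distributionally robust optimization problems max/min ψ(p) subject to D(p) ≤ η. -/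
/-!
The divergence `D` is lower semicontinuous and convex on the simplex, so the feasible set `S` is
compact and convex, and its image `ψ '' S` is a compact interval. On each fibre
`{p ∈ Δ | ψ p = t}`, which is compact, `D` attains its infimum `W t`; hence `W t ≤ η` exactly when
some feasible `p` has `ψ p = t`, i.e. `{t | W t ≤ η} = ψ '' S`.
-/

open Set

namespace EReal

theorem sum_ne_bot {ι : Type*} {s : Finset ι} {f : ι → EReal} (h : ∀ i ∈ s, f i ≠ ⊥) :
    ∑ i ∈ s, f i ≠ ⊥ := by
  classical
  induction s using Finset.induction_on with
  | empty => simp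
  | insert a s ha ih =>
    rw [Finset.forall_mem_insert] at h
    rw [Finset.sum_insert ha, ne_eq, add_eq_bot_iff, not_or]
    exact ⟨h.1, ih h.2⟩

theorem continuous_const_mul {c : EReal} (h₁ : c ≠ ⊥) (h₂ : c ≠ ⊤) :
    Continuous fun x : EReal => c * x :=
  continuous_iff_continuousAt.2 fun _ =>
    EReal.Tendsto.const_mul Filter.tendsto_id (.inl h₁) (.inl h₂)

end EReal

theorem lowerSemicontinuousOn_ereal_sum {ι α : Type*} [TopologicalSpace α] {s : Set α}
    {f : ι → α → EReal} {I : Finset ι} (hf : ∀ i ∈ I, LowerSemicontinuousOn (f i) s)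
    (hbot : ∀ i ∈ I, ∀ x ∈ s, f i x ≠ ⊥) :
    LowerSemicontinuousOn (fun x => ∑ i ∈ I, f i x) s := by
  classical
  induction I using Finset.induction_on with
  | empty => simpa using lowerSemicontinuousOn_const
  | insert a I ha ih =>
    rw [Finset.forall_mem_insert] at hf hbot
    simp only [Finset.sum_insert ha]
    refine hf.1.add' (ih hf.2 hbot.2) fun x hx => EReal.continuousAt_add ?_ ?_
    · exact .inr (EReal.sum_ne_bot fun i hi => hbot.2 i hi x hx)
    · exact .inl (hbot.1 x hx)

theorem LowerSemicontinuousOn.sInf_image_le_iff {α β : Type*} [TopologicalSpace α]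
    [CompleteLinearOrder β] {f : α → β} {K : Set α} (hf : LowerSemicontinuousOn f K)
    (hK : IsCompact K) {r : β} (hr : r < ⊤) :
    sInf (f '' K) ≤ r ↔ ∃ x ∈ K, f x ≤ r := by
  rcases K.eq_empty_or_nonempty with rfl | hne
  · simpa using hr.ne
  obtain ⟨a, haK, hmin⟩ := hf.exists_isMinOn hne hK
  rw [IsLeast.csInf_eq ⟨mem_image_of_mem f haK, forall_mem_image.2 fun x hx => hmin hx⟩]
  exact ⟨fun h => ⟨a, haK, h⟩, fun ⟨x, hxK, hx⟩ => (hmin hxK).trans hx⟩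

theorem setOf_sInf_image_fiber_le_eq_image {α β γ : Type*} [TopologicalSpace α] [T2Space α]
    [TopologicalSpace γ] [T1Space γ] [CompleteLinearOrder β] {K : Set α} {f : α → β}
    {ψ : α → γ} (hK : IsCompact K) (hf : LowerSemicontinuousOn f K) (hψ : ContinuousOn ψ K)
    {r : β} (hr : r < ⊤) :
    {t | sInf (f '' {p | p ∈ K ∧ ψ p = t}) ≤ r} = ψ '' {p | p ∈ K ∧ f p ≤ r} := by
  ext t
  have hfiber : IsCompact (K ∩ ψ ⁻¹' {t}) :=
    hK.of_isClosed_subset (hψ.preimage_isClosed_of_isClosed hK.isClosed isClosed_singleton)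
      inter_subset_left
  change sInf (f '' (K ∩ ψ ⁻¹' {t})) ≤ r ↔ _
  rw [(hf.mono inter_subset_left).sInf_image_le_iff hfiber hr]
  constructor
  · rintro ⟨p, ⟨hpK, hpt⟩, hpr⟩
    exact ⟨p, ⟨hpK, hpr⟩, hpt⟩
  · rintro ⟨p, ⟨hpK, hpr⟩, rfl⟩
    exact ⟨p, ⟨hpK, rfl⟩, hpr⟩

/-- Convexity of an extended-real-valued function, with the arithmetic of `EReal`
(`⊥ + ⊤ = ⊥`, `0 * ⊤ = 0`). -/
def EConvexOn {E : Type*} [AddCommMonoid E] [Module ℝ E] (s : Set E) (f : E → EReal) : Prop :=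
  Convex ℝ s ∧ ∀ ⦃x⦄, x ∈ s → ∀ ⦃y⦄, y ∈ s → ∀ ⦃a b : ℝ⦄, 0 ≤ a → 0 ≤ b → a + b = 1 →
    f (a • x + b • y) ≤ a * f x + b * f y

namespace EConvexOn

variable {E F : Type*} [AddCommMonoid E] [Module ℝ E] [AddCommMonoid F] [Module ℝ F]
  {s : Set E} {f g : E → EReal}

theorem convex_le (hf : EConvexOn s f) (r : EReal) : Convex ℝ {x ∈ s | f x ≤ r} := by
  rintro x ⟨hxs, hx⟩ y ⟨hys, hy⟩ a b ha hb hab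
  refine ⟨hf.1 hxs hys ha hb hab, (hf.2 hxs hys ha hb hab).trans ?_⟩
  calc (a : EReal) * f x + b * f y ≤ a * r + b * r := by gcongr
    _ = r := by
      rw [← EReal.right_distrib_of_nonneg (by exact_mod_cast ha) (by exact_mod_cast hb),
        ← EReal.coe_add, hab, EReal.coe_one, one_mul]

theorem comp_linearMap {t : Set F} {f : F → EReal} (hf : EConvexOn t f) (g : E →ₗ[ℝ] F)
    (hs : Convex ℝ s) (hst : MapsTo g s t) : EConvexOn s fun x => f (g x) := by
  refine ⟨hs, fun x hx y hy a b ha hb hab => ?_⟩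
  simpa only [map_add, map_smul] using hf.2 (hst hx) (hst hy) ha hb hab

theorem add (hf : EConvexOn s f) (hg : EConvexOn s g) : EConvexOn s fun x => f x + g x := by
  refine ⟨hf.1, fun x hx y hy a b ha hb hab => ?_⟩
  have hdistrib (c : ℝ) (hc : 0 ≤ c) (u v : EReal) : (c : EReal) * (u + v) = c * u + c * v :=
    EReal.left_distrib_of_nonneg_of_ne_top (by exact_mod_cast hc) (EReal.coe_ne_top c) u v
  calc f (a • x + b • y) + g (a • x + b • y)
      ≤ (a * f x + b * f y) + (a * g x + b * g y) :=
        add_le_add (hf.2 hx hy ha hb hab) (hg.2 hx hy ha hb hab)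
    _ = a * (f x + g x) + b * (f y + g y) := by
      rw [hdistrib a ha, hdistrib b hb, add_add_add_comm]

theorem sum {ι : Type*} {I : Finset ι} {f : ι → E → EReal} (hs : Convex ℝ s)
    (hf : ∀ i ∈ I, EConvexOn s (f i)) : EConvexOn s fun x => ∑ i ∈ I, f i x := by
  classical
  induction I using Finset.induction_on with
  | empty =>
    refine ⟨hs, fun x _ y _ a b _ _ _ => ?_⟩
    simp
  | insert a I ha ih =>
    rw [Finset.forall_mem_insert] at hf
    simp only [Finset.sum_insert ha]
    exact hf.1.add (ih hf.2)

theorem const_mul (hf : EConvexOn s f) {c : EReal} (hc : 0 ≤ c) (hc' : c ≠ ⊤) :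
    EConvexOn s fun x => c * f x := by
  refine ⟨hf.1, fun x hx y hy a b ha hb hab => ?_⟩
  calc c * f (a • x + b • y) ≤ c * (a * f x + b * f y) :=
        mul_le_mul_of_nonneg_left (hf.2 hx hy ha hb hab) hc
    _ = a * (c * f x) + b * (c * f y) := by
      rw [EReal.left_distrib_of_nonneg_of_ne_top hc hc', mul_left_comm, mul_left_comm c]

end EConvexOn

section Divergence

variable {ι : Type*} [Fintype ι] {φ : ℝ → EReal} {s : Set (ι → ℝ)} {c : EReal} {m : ℝ}

theorem lowerSemicontinuousOn_divergence (hφ : LowerSemicontinuousOn φ (Ici 0))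
    (hbot : ∀ x, 0 ≤ x → φ x ≠ ⊥) (hc : 0 ≤ c) (hc' : c ≠ ⊤)
    (hs : ∀ i, MapsTo (fun p : ι → ℝ => m * p i) s (Ici 0)) :
    LowerSemicontinuousOn (fun p => c * ∑ i, φ (m * p i)) s := by
  have hsum : LowerSemicontinuousOn (fun p => ∑ i, φ (m * p i)) s :=
    lowerSemicontinuousOn_ereal_sum
      (fun i _ => hφ.comp (continuous_const.mul (continuous_apply i)).continuousOn (hs i))
      (fun i _ p hp => hbot _ (hs i hp))
  have hmul := EReal.continuous_const_mul (EReal.bot_lt_zero.trans_le hc).ne' hc'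
  exact hmul.comp_lowerSemicontinuousOn hsum fun _ _ h => mul_le_mul_of_nonneg_left h hc

theorem econvexOn_divergence (hφ : EConvexOn (Ici 0) φ) (hc : 0 ≤ c) (hc' : c ≠ ⊤)
    (hconv : Convex ℝ s) (hs : ∀ i, MapsTo (fun p : ι → ℝ => m * p i) s (Ici 0)) :
    EConvexOn s fun p => c * ∑ i, φ (m * p i) :=
  (EConvexOn.sum hconv fun i _ => hφ.comp_linearMap
    (m • LinearMap.proj (R := ℝ) (φ := fun _ : ι => ℝ) i) hconv (hs i)).const_mul hc hc'

end Divergence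

theorem dro_el_duality_general (n : ℕ) (φ : ℝ → EReal)
    (hne_bot : ∀ x : ℝ, 0 ≤ x → φ x ≠ ⊥)
    (hlsc : LowerSemicontinuousOn φ (Set.Ici (0 : ℝ)))
    (hconv : ∀ x ∈ Set.Ici (0 : ℝ), ∀ y ∈ Set.Ici (0 : ℝ), ∀ t ∈ Set.Icc (0 : ℝ) 1,
      φ (t * x + (1 - t) * y) ≤ (t : EReal) * φ x + ((1 - t : ℝ) : EReal) * φ y)
    (η : ℝ)
    (D : (Fin n → ℝ) → EReal)
    (hD : ∀ p : Fin n → ℝ, D p = ((n : ℝ)⁻¹ : EReal) * ∑ i : Fin n, φ ((n : ℝ) * p i))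
    (S : Set (Fin n → ℝ))
    (hS : S = {p | p ∈ stdSimplex ℝ (Fin n) ∧ D p ≤ (η : EReal)})
    (hSne : S.Nonempty)
    (ψ : (Fin n → ℝ) → ℝ) (hψ : ContinuousOn ψ (stdSimplex ℝ (Fin n)))
    (W : ℝ → EReal)
    (hW : ∀ t : ℝ, W t = sInf (D '' {p | p ∈ stdSimplex ℝ (Fin n) ∧ ψ p = t})) :
    {t : ℝ | W t ≤ (η : EReal)} = Set.Icc (sInf (ψ '' S)) (sSup (ψ '' S)) := by
  have hφ : EConvexOn (Ici 0) φ := ⟨convex_Ici 0, fun x hx y hy a b ha hb hab => by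
    obtain rfl : b = 1 - a := by linarith
    exact hconv x hx y hy a ⟨ha, by linarith⟩⟩
  have hΔ : ∀ i, MapsTo (fun p : Fin n → ℝ => (n : ℝ) * p i) (stdSimplex ℝ (Fin n)) (Ici 0) :=
    fun i p hp => mul_nonneg n.cast_nonneg (hp.1 i)
  have hc : (0 : EReal) ≤ ((n : ℝ)⁻¹ : EReal) := by positivity
  have hc' : ((n : ℝ)⁻¹ : EReal) ≠ ⊤ := (EReal.inv_lt_top _).ne
  have hD_lsc : LowerSemicontinuousOn D (stdSimplex ℝ (Fin n)) := by
    rw [funext hD]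
    exact lowerSemicontinuousOn_divergence hlsc hne_bot hc hc' hΔ
  have hD_conv : EConvexOn (stdSimplex ℝ (Fin n)) D := by
    rw [funext hD]
    exact econvexOn_divergence hφ hc hc' (convex_stdSimplex ℝ (Fin n)) hΔ
  have hScomp : IsCompact S :=
    hS ▸ hD_lsc.isCompact_inter_preimage_Iic (isCompact_stdSimplex ℝ (Fin n)) η
  have hSconv : Convex ℝ S := hS ▸ hD_conv.convex_le η
  have hψS : ContinuousOn ψ S := hψ.mono (hS ▸ fun _ hp => hp.1)
  rw [show W = _ from funext hW, setOf_sInf_image_fiber_le_eq_image (isCompact_stdSimplex ℝ (Fin n))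
    hD_lsc hψ (EReal.coe_lt_top η), ← hS]
  exact eq_Icc_of_connected_compact ⟨hSne.image ψ, hSconv.isPreconnected.image ψ hψS⟩
    (hScomp.image_of_continuousOn hψS)

/-- **Duality between DRO and empirical likelihood on the `n`-point simplex (Section 6.1).**
Let `φ : [0,∞) → (−∞,∞]` be convex, lower semicontinuous and finite on `(0,∞)`, let
`D(p) = (1/n)·Σᵢ φ(n·pᵢ)` on the simplex `Δ`, let `S = {p ∈ Δ : D(p) ≤ η}` be nonempty, let
`ψ : Δ → ℝ` be continuous, and let `W(t) = inf {D(p) : p ∈ Δ, ψ(p) = t}` (with `inf ∅ = ⊤`).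
Then `{t : W(t) ≤ η} = [ψ_min, ψ_max]`, where `ψ_min`/`ψ_max` are the optimal values of the
DRO pair `min/max ψ(p)` over `S`. -/
theorem dro_el_duality (n : ℕ) (hn : 1 ≤ n) (φ : ℝ → EReal)
    (hne_bot : ∀ x : ℝ, 0 ≤ x → φ x ≠ ⊥)
    (hfin : ∀ x : ℝ, 0 < x → φ x ≠ ⊤)
    (hlsc : LowerSemicontinuousOn φ (Set.Ici (0 : ℝ)))
    (hconv : ∀ x ∈ Set.Ici (0 : ℝ), ∀ y ∈ Set.Ici (0 : ℝ), ∀ t ∈ Set.Icc (0 : ℝ) 1,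
      φ (t * x + (1 - t) * y) ≤ (t : EReal) * φ x + ((1 - t : ℝ) : EReal) * φ y)
    (η : ℝ)
    (D : (Fin n → ℝ) → EReal)
    (hD : ∀ p : Fin n → ℝ, D p = ((n : ℝ)⁻¹ : EReal) * ∑ i : Fin n, φ ((n : ℝ) * p i))
    (S : Set (Fin n → ℝ))
    (hS : S = {p | p ∈ stdSimplex ℝ (Fin n) ∧ D p ≤ (η : EReal)})
    (hSne : S.Nonempty)
    (ψ : (Fin n → ℝ) → ℝ) (hψ : ContinuousOn ψ (stdSimplex ℝ (Fin n)))
    (W : ℝ → EReal)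
    (hW : ∀ t : ℝ, W t = sInf (D '' {p | p ∈ stdSimplex ℝ (Fin n) ∧ ψ p = t})) :
    {t : ℝ | W t ≤ (η : EReal)} = Set.Icc (sInf (ψ '' S)) (sSup (ψ '' S)) :=
  dro_el_duality_general n φ hne_bot hlsc hconv η D hD S hS hSne ψ hψ W hW
end

section
/- Let φ₂ > 0, φ₃, φ₄ be real numbers (playing the roles of φ''(1), φ'''(1), φ⁽⁴⁾(1)), and consider the polynomial A(x) = −((2φ₂+φ₃)²·x⁵·γ²)/(36·φ₂²·κ₂³) − (x³/(36·φ₂²·κ₂³))·( 4(φ₂+φ₃)(2φ₂+φ₃)γ² + 3(−2φ₂² − 4φ₂φ₃ − 3φ₃² + φ₂φ₄)κ₂μ₄ + 9(2φ₂+φ₃)²κ₂³ + 6φ₂(2φ₂+φ₃)γμ_{2,c} − 6φ₂(2φ₂+φ₃)γκ₂μ_{2,d} ) − (x/(36·κ₂³))·( −12γ² + 18κ₂μ₄ + 36κ₂(μ_{2,a}+2μ_{2,b}) − 36γμ_{2,c} − 9μ_{2,c}² − 18κ₂μ_{2,c}μ_{2,d} + 9κ₂²(−2μ_{2,2} + μ_{2,d}²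 − 4μ_{1,2,d}) ). Then the following are equivalent: (a) for every choice of real parameters κ₂ > 0, γ, μ₄, μ_{2,a}, μ_{2,b}, μ_{2,c}, μ_{2,d}, μ_{2,2}, μ_{1,2,d}, the coefficients of x³ and x⁵ in A(x) vanish (equivalently, A(x)/x does not depend on x); (b) φ₃ = −2φ₂ and φ₄ = −3φ₃. -/
/-!
`A(x)` is an odd quintic in `x`, so it is linear exactly when its `x⁵` and `x³` coefficients
vanish (compare the values at `x = 1, 2, 3`). The `x⁵` coefficient is a nonzero multiple of
`(2φ₂ + φ₃)² γ²`, which forces `φ₃ = -2φ₂`; after this substitution the `x³` coefficient collapses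
to `-(φ₄ + 3φ₃) μ₄ / (12 φ₂ κ₂²)`, which forces `φ₄ = -3φ₃`.
-/

noncomputable section

/-- The coverage-error polynomial `A(x)` of Theorem 4.1, with `φ₂, φ₃, φ₄` playing the roles of
`φ''(1), φ'''(1), φ⁽⁴⁾(1)` and the remaining arguments the population moments of the influence
functions. -/
def Apoly (φ₂ φ₃ φ₄ κ₂ γ μ₄ μ2a μ2b μ2c μ2d μ22 μ12d x : ℝ) : ℝ :=
  -((2 * φ₂ + φ₃) ^ 2 * x ^ 5 * γ ^ 2) / (36 * φ₂ ^ 2 * κ₂ ^ 3)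
    - x ^ 3 / (36 * φ₂ ^ 2 * κ₂ ^ 3) *
        (4 * (φ₂ + φ₃) * (2 * φ₂ + φ₃) * γ ^ 2
          + 3 * (-2 * φ₂ ^ 2 - 4 * φ₂ * φ₃ - 3 * φ₃ ^ 2 + φ₂ * φ₄) * κ₂ * μ₄
          + 9 * (2 * φ₂ + φ₃) ^ 2 * κ₂ ^ 3
          + 6 * φ₂ * (2 * φ₂ + φ₃) * γ * μ2c
          - 6 * φ₂ * (2 * φ₂ + φ₃) * γ * κ₂ * μ2d)
    - x / (36 * κ₂ ^ 3) *
        (-12 * γ ^ 2 + 18 * κ₂ * μ₄ + 36 * κ₂ * (μ2a + 2 * μ2b) - 36 * γ * μ2c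
          - 9 * μ2c ^ 2 - 18 * κ₂ * μ2c * μ2d
          + 9 * κ₂ ^ 2 * (-2 * μ22 + μ2d ^ 2 - 4 * μ12d))

theorem exists_forall_odd_quintic_eq_mul_iff {R : Type*} [CommRing R] [NoZeroDivisors R]
    [CharZero R] (a b d : R) :
    (∃ c : R, ∀ x : R, a * x ^ 5 + b * x ^ 3 + d * x = c * x) ↔ a = 0 ∧ b = 0 := by
  constructor
  · rintro ⟨c, hc⟩
    have h120a : (120 : R) * a = 0 := by
      linear_combination hc 3 - 4 * hc 2 + 5 * hc 1
    have ha : a = 0 := (mul_eq_zero.1 h120a).resolve_left (by norm_num)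
    have h6b : (6 : R) * b = 0 := by
      linear_combination hc 2 - 2 * hc 1 - 30 * ha
    exact ⟨ha, (mul_eq_zero.1 h6b).resolve_left (by norm_num)⟩
  · rintro ⟨rfl, rfl⟩
    exact ⟨d, fun x => by ring⟩

def Apoly.quinticCoeff (φ₂ φ₃ κ₂ γ : ℝ) : ℝ :=
  -((2 * φ₂ + φ₃) ^ 2 * γ ^ 2) / (36 * φ₂ ^ 2 * κ₂ ^ 3)

def Apoly.cubicCoeff (φ₂ φ₃ φ₄ κ₂ γ μ₄ μ2c μ2d : ℝ) : ℝ :=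
  -(4 * (φ₂ + φ₃) * (2 * φ₂ + φ₃) * γ ^ 2
      + 3 * (-2 * φ₂ ^ 2 - 4 * φ₂ * φ₃ - 3 * φ₃ ^ 2 + φ₂ * φ₄) * κ₂ * μ₄
      + 9 * (2 * φ₂ + φ₃) ^ 2 * κ₂ ^ 3
      + 6 * φ₂ * (2 * φ₂ + φ₃) * γ * μ2c
      - 6 * φ₂ * (2 * φ₂ + φ₃) * γ * κ₂ * μ2d) / (36 * φ₂ ^ 2 * κ₂ ^ 3)

def Apoly.linearCoeff (κ₂ γ μ₄ μ2a μ2b μ2c μ2d μ22 μ12d : ℝ) : ℝ :=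
  -(-12 * γ ^ 2 + 18 * κ₂ * μ₄ + 36 * κ₂ * (μ2a + 2 * μ2b) - 36 * γ * μ2c
      - 9 * μ2c ^ 2 - 18 * κ₂ * μ2c * μ2d
      + 9 * κ₂ ^ 2 * (-2 * μ22 + μ2d ^ 2 - 4 * μ12d)) / (36 * κ₂ ^ 3)

namespace Apoly

variable {φ₂ φ₃ φ₄ κ₂ γ μ₄ μ2a μ2b μ2c μ2d μ22 μ12d : ℝ}

theorem eq_odd_quintic (x : ℝ) :
    Apoly φ₂ φ₃ φ₄ κ₂ γ μ₄ μ2a μ2b μ2c μ2d μ22 μ12d x =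
      quinticCoeff φ₂ φ₃ κ₂ γ * x ^ 5 + cubicCoeff φ₂ φ₃ φ₄ κ₂ γ μ₄ μ2c μ2d * x ^ 3
        + linearCoeff κ₂ γ μ₄ μ2a μ2b μ2c μ2d μ22 μ12d * x := by
  unfold Apoly quinticCoeff cubicCoeff linearCoeff
  ring

theorem exists_forall_eq_mul_iff :
    (∃ c : ℝ, ∀ x : ℝ, Apoly φ₂ φ₃ φ₄ κ₂ γ μ₄ μ2a μ2b μ2c μ2d μ22 μ12d x = c * x) ↔
      quinticCoeff φ₂ φ₃ κ₂ γ = 0 ∧ cubicCoeff φ₂ φ₃ φ₄ κ₂ γ μ₄ μ2c μ2d = 0 := by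
  simp only [eq_odd_quintic]
  exact exists_forall_odd_quintic_eq_mul_iff _ _ _

theorem forall_quinticCoeff_eq_zero_iff (hφ₂ : φ₂ ≠ 0) (hκ₂ : κ₂ ≠ 0) :
    (∀ γ, quinticCoeff φ₂ φ₃ κ₂ γ = 0) ↔ φ₃ = -2 * φ₂ := by
  constructor
  · intro h
    have h1 : (2 * φ₂ + φ₃) ^ 2 = 0 := by
      have := h 1
      rw [quinticCoeff, div_eq_zero_iff, neg_eq_zero, one_pow, mul_one] at this
      exact this.resolve_right (by positivity)
    linarith [pow_eq_zero_iff two_ne_zero |>.1 h1]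
  · rintro rfl γ
    rw [quinticCoeff]
    ring

theorem forall_cubicCoeff_eq_zero_iff (hφ₂ : φ₂ ≠ 0) (hκ₂ : κ₂ ≠ 0) (hφ₃ : φ₃ = -2 * φ₂) :
    (∀ μ₄, cubicCoeff φ₂ φ₃ φ₄ κ₂ γ μ₄ μ2c μ2d = 0) ↔ φ₄ = -3 * φ₃ := by
  subst hφ₃
  have hcubic : ∀ μ₄, cubicCoeff φ₂ (-2 * φ₂) φ₄ κ₂ γ μ₄ μ2c μ2d =
      -((φ₄ + 3 * (-2 * φ₂)) * μ₄) / (12 * φ₂ * κ₂ ^ 2) := by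
    intro μ₄
    unfold cubicCoeff
    field_simp
    ring
  simp only [hcubic]
  constructor
  · intro h
    have h1 := h 1
    field_simp at h1
    linarith
  · intro h μ₄
    rw [h]
    ring

end Apoly

/-- **Criterion for Bartlett correctability (generalizing Corcoran).**
For `φ₂ > 0`, the coefficients of `x³` and `x⁵` in `A(x)` vanish for every choice of the
population-moment parameters (equivalently, `A(x)/x` does not depend on `x`, i.e. `A` is linear)
if and only if `φ₃ = −2φ₂` and `φ₄ = −3φ₃`. -/
theorem bartlett_correctability_criterion (φ₂ φ₃ φ₄ : ℝ) (hφ₂ : 0 < φ₂) :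
    (∀ κ₂ γ μ₄ μ2a μ2b μ2c μ2d μ22 μ12d : ℝ, 0 < κ₂ →
        ∃ c : ℝ, ∀ x : ℝ, Apoly φ₂ φ₃ φ₄ κ₂ γ μ₄ μ2a μ2b μ2c μ2d μ22 μ12d x = c * x) ↔
      (φ₃ = -2 * φ₂ ∧ φ₄ = -3 * φ₃) := by
  simp only [Apoly.exists_forall_eq_mul_iff]
  constructor
  · intro h
    have hφ₃ : φ₃ = -2 * φ₂ := (Apoly.forall_quinticCoeff_eq_zero_iff hφ₂.ne' one_ne_zero).1
      fun γ => (h 1 γ 0 0 0 0 0 0 0 one_pos).1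
    exact ⟨hφ₃, (Apoly.forall_cubicCoeff_eq_zero_iff hφ₂.ne' one_ne_zero hφ₃).1
      fun μ₄ => (h 1 0 μ₄ 0 0 0 0 0 0 one_pos).2⟩
  · rintro ⟨hφ₃, hφ₄⟩ κ₂ γ μ₄ _ _ μ2c μ2d _ _ hκ₂
    exact ⟨(Apoly.forall_quinticCoeff_eq_zero_iff hφ₂.ne' hκ₂.ne').2 hφ₃ γ,
      (Apoly.forall_cubicCoeff_eq_zero_iff hφ₂.ne' hκ₂.ne' hφ₃).2 hφ₄ μ₄⟩
end
end
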